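/- arXiv:2204.02644 — 3 statements merged into one kernel-verified Lean document; each statement's English description precedes it below -/
import Mathlib

section
/- Let α > 1 and β be real numbers, and let (n_k)_{k≥0} be an (α,β)-admissible sequence (strictly increasing positive integers with bounded phase sequence σ_k := n_{k+1} − α·n_k − β·ln(n_k)). If there exists an integer ℓ ≥ 1 such that (σ_k) converges to a cycle of period ℓ (i.e. for every 0 ≤ j < ℓ the subsequence (σ_{kℓ+j})_{k≥0} converges), then α has the Pisot property: there exists a nonzero real number ζ such that ‖ζ·α^k‖ → 0 as k → ∞. -/
open Filter Topology

/-- The phase sequence of a sequence of positive integers, relative to `α` and `β`: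
`σ_k = n_{k+1} - α n_k - β ln n_k`. -/
noncomputable def phaseSeq (α β : ℝ) (n : ℕ → ℕ) (k : ℕ) : ℝ :=
  (n (k + 1) : ℝ) - α * (n k : ℝ) - β * Real.log (n k)

/-- If a real sequence converges along every residue class mod `ℓ` to the same limit,
it converges. -/
lemma tendsto_of_residues {g : ℕ → ℝ} {L : ℝ} {ℓ : ℕ} (hℓ : 0 < ℓ)
    (h : ∀ j < ℓ, Tendsto (fun k => g (k * ℓ + j)) atTop (𝓝 L)) :
    Tendsto g atTop (𝓝 L) := by
  rw [Metric.tendsto_atTop]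
  intro ε hε
  have h' : ∀ j : Fin ℓ, ∃ N, ∀ k ≥ N, dist (g (k * ℓ + (j : ℕ))) L < ε := fun j =>
    Metric.tendsto_atTop.mp (h j j.2) ε hε
  choose N hN using h'
  refine ⟨(Finset.univ.sup N + 1) * ℓ, fun k hk => ?_⟩
  have hj : k % ℓ < ℓ := Nat.mod_lt _ hℓ
  have hq : Finset.univ.sup N ≤ k / ℓ := by
    have h1 : (Finset.univ.sup N + 1) * ℓ / ℓ ≤ k / ℓ := Nat.div_le_div_right hk
    rw [Nat.mul_div_cancel _ hℓ] at h1
    omega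
  have hk' : k / ℓ * ℓ + ((⟨k % ℓ, hj⟩ : Fin ℓ) : ℕ) = k := by
    simpa [mul_comm] using Nat.div_add_mod k ℓ
  have := hN ⟨k % ℓ, hj⟩ (k / ℓ) (le_trans (Finset.le_sup (Finset.mem_univ _)) hq)
  rwa [hk'] at this

/-- If an `(α,β)`-admissible sequence has phase sequence converging to a cycle of some period
`ℓ ≥ 1`, then `α` has the Pisot property: there exists a nonzero real `ζ` with
`‖ζ α^k‖ → 0`, where `‖·‖` is the distance to the nearest integer. -/
theorem pisot_of_phase_converges_to_cycle (α β : ℝ) (hα : 1 < α) (n : ℕ → ℕ)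
    (hmono : StrictMono n) (hpos : ∀ k, 0 < n k)
    (hbdd : ∃ C : ℝ, ∀ k, |phaseSeq α β n k| ≤ C)
    (ℓ : ℕ) (hℓ : 1 ≤ ℓ)
    (hcyc : ∀ j < ℓ, ∃ L : ℝ,
      Tendsto (fun k => phaseSeq α β n (k * ℓ + j)) atTop (𝓝 L)) :
    ∃ ζ : ℝ, ζ ≠ 0 ∧
      Tendsto (fun k : ℕ => |ζ * α ^ k - (round (ζ * α ^ k) : ℝ)|) atTop (𝓝 0) := by
  obtain ⟨C, hC⟩ := hbdd
  set σ : ℕ → ℝ := phaseSeq α β n with hσdef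
  have hα0 : (0:ℝ) < α := lt_trans one_pos hα
  have hnpos : ∀ k, (0:ℝ) < (n k : ℝ) := fun k => by exact_mod_cast hpos k
  have hrec : ∀ k, (n (k+1) : ℝ) = α * (n k : ℝ) + β * Real.log (n k) + σ k := by
    intro k; simp only [hσdef, phaseSeq]; ring
  -- n k → ∞
  have hnat : Tendsto (fun k => (n k : ℝ)) atTop atTop := by
    apply tendsto_atTop_mono (fun k => ?_) tendsto_natCast_atTop_atTop
    exact_mod_cast hmono.le_apply
  -- ratio tends to α
  have hratio : Tendsto (fun k => (n (k+1) : ℝ) / (n k : ℝ)) atTop (𝓝 α) := by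
    have h1 : Tendsto (fun k => Real.log (n k) / (n k : ℝ)) atTop (𝓝 0) :=
      (Real.isLittleO_log_id_atTop.tendsto_div_nhds_zero).comp hnat
    have h2 : Tendsto (fun k => σ k / (n k : ℝ)) atTop (𝓝 0) := by
      have hb : ∀ k, ‖σ k / (n k : ℝ)‖ ≤ C / (n k : ℝ) := by
        intro k
        rw [Real.norm_eq_abs, abs_div, abs_of_pos (hnpos k)]
        gcongr
        exact hC k
      exact squeeze_zero_norm hb (tendsto_const_nhds.div_atTop hnat)
    have heq : ∀ k, (n (k+1) : ℝ) / (n k : ℝ)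
        = α + β * (Real.log (n k) / (n k : ℝ)) + σ k / (n k : ℝ) := by
      intro k
      rw [hrec k, div_eq_iff (hnpos k).ne', ← mul_div_assoc, add_mul, add_mul,
        div_mul_cancel₀ _ (hnpos k).ne', div_mul_cancel₀ _ (hnpos k).ne']
    have H := (((tendsto_const_nhds : Tendsto (fun _ : ℕ => α) atTop (𝓝 α)).add (h1.const_mul β)).add h2)
    simp only [mul_zero, add_zero] at H
    exact H.congr (fun k => (heq k).symm)
  -- log differences tend to log α
  have hlogd : Tendsto (fun k => Real.log (n (k+1)) - Real.log (n k)) atTop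
      (𝓝 (Real.log α)) := by
    have H := ((Real.continuousAt_log hα0.ne').tendsto).comp hratio
    apply H.congr
    intro k
    exact Real.log_div (hnpos (k+1)).ne' (hnpos k).ne'
  -- log difference over ℓ steps
  have hlogℓ : Tendsto (fun k => Real.log (n (k+ℓ)) - Real.log (n k)) atTop
      (𝓝 ((ℓ : ℝ) * Real.log α)) := by
    have hsum : ∀ k, ∑ i ∈ Finset.range ℓ, (Real.log (n (k+i+1)) - Real.log (n (k+i)))
        = Real.log (n (k+ℓ)) - Real.log (n k) := by
      intro k
      have h := Finset.sum_range_sub (fun i => Real.log (n (k+i))) ℓ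
      simpa [Nat.add_assoc] using h
    have H : Tendsto (fun k => ∑ i ∈ Finset.range ℓ,
        (Real.log (n (k+i+1)) - Real.log (n (k+i)))) atTop (𝓝 ((ℓ:ℝ) * Real.log α)) := by
      have := tendsto_finset_sum (Finset.range ℓ)
        (fun i (_ : i ∈ Finset.range ℓ) => hlogd.comp (tendsto_add_atTop_nat i))
      simpa [mul_comm] using this
    exact H.congr (fun k => hsum k)
  -- the integer sequence m and its drift δ
  set m : ℕ → ℤ := fun k => (n (k + 2*ℓ) : ℤ) - 2 * (n (k + ℓ) : ℤ) + (n k : ℤ) with hm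
  set δ : ℕ → ℝ := fun k => (m (k+1) : ℝ) - α * (m k : ℝ) with hδdef
  have hmcast : ∀ k, (m k : ℝ) = (n (k+2*ℓ) : ℝ) - 2*(n (k+ℓ) : ℝ) + (n k : ℝ) := by
    intro k; simp only [hm]; push_cast; ring
  -- A : second log-difference tends to 0
  have A : Tendsto (fun k => (Real.log (n (k+ℓ+ℓ)) - Real.log (n (k+ℓ)))
      - (Real.log (n (k+ℓ)) - Real.log (n k))) atTop (𝓝 0) := by
    have A1 := hlogℓ.comp (tendsto_add_atTop_nat ℓ)
    have := A1.sub hlogℓ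
    rwa [sub_self] at this
  -- B : second σ-difference tends to 0
  have B : Tendsto (fun k => (σ (k+ℓ+ℓ) - σ (k+ℓ)) - (σ (k+ℓ) - σ k)) atTop (𝓝 0) := by
    apply tendsto_of_residues hℓ
    intro j hj
    obtain ⟨L, hL⟩ := hcyc j hj
    have h1 := hL.comp (tendsto_add_atTop_nat 1)
    have h2 := hL.comp (tendsto_add_atTop_nat 2)
    have H := (h2.sub h1).sub (h1.sub hL)
    simp only [sub_self] at H
    apply H.congr
    intro k
    have e2 : (k+2)*ℓ + j = k*ℓ+j+ℓ+ℓ := by ring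
    have e1 : (k+1)*ℓ + j = k*ℓ+j+ℓ := by ring
    simp only [Function.comp]
    rw [e2, e1]
  have hδeq : ∀ k, δ k
      = β * ((Real.log (n (k+ℓ+ℓ)) - Real.log (n (k+ℓ))) - (Real.log (n (k+ℓ)) - Real.log (n k)))
        + ((σ (k+ℓ+ℓ) - σ (k+ℓ)) - (σ (k+ℓ) - σ k)) := by
    intro k
    have e0 : k+ℓ+ℓ = k+2*ℓ := by ring
    have e1 : k+1+2*ℓ = k+2*ℓ+1 := by ring
    have e2 : k+1+ℓ = k+ℓ+1 := by ring
    simp only [hδdef]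
    rw [hmcast (k+1), hmcast k, e0, e1, e2, hrec (k+2*ℓ), hrec (k+ℓ), hrec k]
    ring
  have hδ0 : Tendsto δ atTop (𝓝 0) := by
    have H := (A.const_mul β).add B
    rw [mul_zero, add_zero] at H
    exact H.congr (fun k => (hδeq k).symm)
  -- the normalized sequence f and the key estimate
  have hαpow : ∀ k : ℕ, (0:ℝ) < α ^ k := fun k => pow_pos hα0 k
  set f : ℕ → ℝ := fun k => (m k : ℝ) / α ^ k with hf
  have hfd : ∀ k, f (k+1) - f k = δ k / α^(k+1) := by
    intro k
    have hmk : (m (k+1) : ℝ) = δ k + α * (m k : ℝ) := by simp only [hδdef]; ring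
    simp only [hf]
    rw [hmk, pow_succ]
    field_simp
    ring
  have KE : ∀ ε > (0:ℝ), ∃ K, ∀ k, K ≤ k → ∀ k', k ≤ k' →
      |f k' - f k| ≤ ε * ((1/α)^k - (1/α)^k') := by
    intro ε hε
    have hδsmall : ∀ᶠ i in atTop, |δ i| ≤ ε * (α - 1) := by
      have h := Metric.tendsto_atTop.mp hδ0 (ε*(α-1)) (by nlinarith)
      obtain ⟨N, hN⟩ := h
      exact eventually_atTop.mpr ⟨N, fun i hi => le_of_lt (by
        simpa [Real.dist_eq] using hN i hi)⟩
    obtain ⟨K, hK⟩ := eventually_atTop.mp hδsmall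
    refine ⟨K, fun k hk k' hkk' => ?_⟩
    induction k', hkk' using Nat.le_induction with
    | base => simp
    | succ k' hkk' ih =>
      have hstep : |f (k'+1) - f k'| ≤ ε*(α-1) / α^(k'+1) := by
        rw [hfd k', abs_div, abs_of_pos (hαpow (k'+1))]
        gcongr
        exact hK k' (le_trans hk hkk')
      have htri : |f (k'+1) - f k| ≤ |f (k'+1) - f k'| + |f k' - f k| :=
        abs_sub_le (f (k'+1)) (f k') (f k)
      have hkey : (1/α)^k' = α * (1/α)^(k'+1) := by
        rw [pow_succ]
        field_simp
      have hlast : ε*(α-1)/α^(k'+1) + ε * ((1/α)^k - (1/α)^k')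
          = ε * ((1/α)^k - (1/α)^(k'+1)) := by
        rw [hkey, one_div_pow, div_eq_mul_inv, div_eq_mul_inv]
        ring
      calc |f (k'+1) - f k| ≤ |f (k'+1) - f k'| + |f k' - f k| := htri
        _ ≤ ε*(α-1)/α^(k'+1) + ε * ((1/α)^k - (1/α)^k') := add_le_add hstep ih
        _ = ε * ((1/α)^k - (1/α)^(k'+1)) := hlast
  have hrpos : (0:ℝ) < 1/α := by positivity
  have hrle : (1:ℝ)/α ≤ 1 := by rw [div_le_one hα0]; exact hα.le
  -- f is Cauchy
  have hcau : CauchySeq f := by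
    rw [Metric.cauchySeq_iff']
    intro ε hε
    obtain ⟨K, hK⟩ := KE (ε/2) (by linarith)
    refine ⟨K, fun k hk => ?_⟩
    have h1 := hK K le_rfl k hk
    have h2 : (1/α)^K - (1/α)^k ≤ 1 := by
      have h3 : (1/α)^K ≤ 1 := pow_le_one₀ hrpos.le hrle
      have h4 : (0:ℝ) ≤ (1/α)^k := pow_nonneg hrpos.le k
      linarith
    rw [Real.dist_eq]
    calc |f k - f K| ≤ ε/2 * ((1/α)^K - (1/α)^k) := h1
      _ ≤ ε/2 * 1 := by
          apply mul_le_mul_of_nonneg_left h2 (by linarith)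
      _ < ε := by linarith
  obtain ⟨ζ, hζ⟩ := cauchySeq_tendsto_of_complete hcau
  -- main estimate : |ζ α^k - m k| → 0
  have hMain : Tendsto (fun k => |ζ * α ^ k - (m k : ℝ)|) atTop (𝓝 0) := by
    rw [Metric.tendsto_atTop]
    intro ε hε
    obtain ⟨K, hK⟩ := KE (ε/2) (by linarith)
    refine ⟨K, fun k hk => ?_⟩
    have hb : |ζ - f k| ≤ ε/2 * (1/α)^k := by
      have hlim : Tendsto (fun k' => |f k' - f k|) atTop (𝓝 (|ζ - f k|)) :=
        (hζ.sub tendsto_const_nhds).abs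
      apply le_of_tendsto hlim
      filter_upwards [eventually_ge_atTop k] with k' hk'
      calc |f k' - f k| ≤ ε/2 * ((1/α)^k - (1/α)^k') := hK k hk k' hk'
        _ ≤ ε/2 * (1/α)^k := by
            have h4 : (0:ℝ) ≤ (1/α)^k' := pow_nonneg hrpos.le k'
            nlinarith
    have heq : |ζ * α^k - (m k : ℝ)| = α^k * |ζ - f k| := by
      have hinner : ζ * α^k - (m k : ℝ) = α^k * (ζ - f k) := by
        simp only [hf]
        field_simp
      rw [hinner, abs_mul, abs_of_pos (hαpow k)]
    rw [Real.dist_eq, sub_zero, abs_of_nonneg (abs_nonneg _)]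
    calc |ζ*α^k - (m k : ℝ)| = α^k * |ζ - f k| := heq
      _ ≤ α^k * (ε/2 * (1/α)^k) := mul_le_mul_of_nonneg_left hb (hαpow k).le
      _ = ε/2 * (α * (1/α))^k := by rw [mul_pow]; ring
      _ = ε/2 := by rw [mul_one_div_cancel hα0.ne', one_pow, mul_one]
      _ < ε := by linarith
  -- growth estimates for ζ ≠ 0
  have hqev : ∀ᶠ k in atTop, (α+1)/2 * (n k : ℝ) ≤ (n (k+1) : ℝ) := by
    have hlt : (α+1)/2 < α := by linarith
    filter_upwards [hratio.eventually (eventually_gt_nhds hlt)] with k hk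
    exact le_of_lt ((lt_div_iff₀ (hnpos k)).mp hk)
  obtain ⟨K₂, hK₂⟩ := eventually_atTop.mp hqev
  have hζ0 : ζ ≠ 0 := by
    intro h0
    subst h0
    have h1 : Tendsto (fun k => |(m k : ℝ)|) atTop (𝓝 0) := by
      have := hMain
      simpa using this
    have hm0 : ∀ᶠ k in atTop, m k = 0 := by
      have h2 := Metric.tendsto_atTop.mp h1 1 one_pos
      obtain ⟨K₃, hK₃⟩ := h2
      refine eventually_atTop.mpr ⟨K₃, fun k hk => ?_⟩
      have h3 := hK₃ k hk
      rw [Real.dist_eq, sub_zero, abs_of_nonneg (abs_nonneg _)] at h3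
      have h4 : |m k| < 1 := by exact_mod_cast (by push_cast; exact h3 : ((|m k| : ℤ) : ℝ) < 1)
      have h5 := abs_lt.mp h4
      omega
    obtain ⟨K₃, hK₃⟩ := eventually_atTop.mp hm0
    have hd : ∀ t, (n (K₃ + t*ℓ + ℓ) : ℤ) - n (K₃ + t*ℓ) = (n (K₃+ℓ) : ℤ) - n K₃ := by
      intro t
      induction t with
      | zero => simp
      | succ t ih =>
        have h := hK₃ (K₃ + t*ℓ) (by omega)
        simp only [hm] at h
        have e : K₃ + (t+1)*ℓ = K₃ + t*ℓ + ℓ := by ring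
        have e2 : K₃ + t*ℓ + 2*ℓ = K₃ + t*ℓ + ℓ + ℓ := by ring
        rw [e]
        rw [e2] at h
        omega
    set q : ℝ := (α+1)/2 with hqdef
    have hq1 : 1 < q := by rw [hqdef]; linarith
    have hgrow : ∀ k, K₂ ≤ k → (q - 1) * (n k : ℝ) ≤ (n (k+ℓ) : ℝ) - n k := by
      intro k hk
      have h1 := hK₂ k hk
      have h2 : (n (k+1) : ℝ) ≤ (n (k+ℓ) : ℝ) := by
        exact_mod_cast Nat.cast_le.mpr (hmono.monotone (by omega))
      linarith
    have hbig : Tendsto (fun t => (n (K₃ + t*ℓ) : ℝ)) atTop atTop := by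
      apply tendsto_atTop_mono (fun t => ?_) tendsto_natCast_atTop_atTop
      have h5 : t ≤ K₃ + t*ℓ := by
        have := Nat.le_mul_of_pos_right t hℓ
        omega
      exact_mod_cast le_trans h5 hmono.le_apply
    have hev := (hbig.eventually_gt_atTop (((n (K₃+ℓ) : ℝ) - n K₃)/(q-1))).and
      (eventually_atTop.mpr ⟨K₂, fun t ht => show K₂ ≤ K₃ + t*ℓ by
        have := Nat.le_mul_of_pos_right t hℓ
        omega⟩)
    obtain ⟨t, h1, h2⟩ := hev.exists
    have h3 := hgrow (K₃ + t*ℓ) h2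
    have h4 : (n (K₃ + t*ℓ + ℓ) : ℝ) - n (K₃ + t*ℓ) = (n (K₃+ℓ) : ℝ) - n K₃ := by
      exact_mod_cast hd t
    have h5 : (n (K₃+ℓ) : ℝ) - n K₃ < (q-1) * n (K₃ + t*ℓ) := by
      rw [div_lt_iff₀ (by linarith : (0:ℝ) < q - 1)] at h1
      linarith
    linarith
  refine ⟨ζ, hζ0, ?_⟩
  exact squeeze_zero (fun k => abs_nonneg _) (fun k => round_le (ζ * α^k) (m k)) hMain
end

section
/- Let α > 1 be a real number with the Pisot property (there exists a nonzero real ζ with ‖ζ·α^k‖ → 0), let k₁ be an integer and k₂ ≥ 1 an integer with gcd(k₁, k₂) = 1, and set β := ((α−1)/ln α)·(k₁/k₂). Then there exists an (α,β)-admissible sequence (n_k)_{k≥0} (strictly increasing positive integers with bounded phase sequence σ_k := n_{k+1} − α·n_k − β·ln(n_k)) whose phase sequence converges to a cycle of period k₂, i.e. for each 0 ≤ j < k₂ the subsequence (σ_{k·k₂+j})_{k≥0} converges. -/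
/-!
Choose `ζ > 0` and integers `a k` with `a k - ζ α ^ k → 0` (the Pisot property, up to the sign
of `ζ`), and put `m k = a k - ⌊k₁ k / k₂⌋`. Then `m k = ζ α ^ k - (k₁ / k₂) k + e k`, where
`e k` is `(k₁ k mod k₂) / k₂ + o(1)`, so `e` converges along every residue class mod `k₂`, and
`log (m k) = k log α + log ζ + o(1)`. The choice of `β` gives `β k log α = (α - 1) (k₁ / k₂) k`,
which cancels the linear term of `m (k + 1) - α m k`; hence the phase of `m` is
`e (k + 1) - α e k - k₁ / k₂ - β log ζ + o(1)` and converges to a cycle of period `k₂`.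
A tail of `m`, which is positive and increasing, is the required sequence.
-/

open Filter Topology

open Real

/-- Residues `j ≥ p` are allowed: they only relabel the residue classes, which makes the notion
invariant under shifts of the index. -/
def ConvergesToCycle (σ : ℕ → ℝ) (p : ℕ) : Prop :=
  ∀ j, ∃ L, Tendsto (fun k => σ (k * p + j)) atTop (𝓝 L)

namespace ConvergesToCycle

variable {σ τ : ℕ → ℝ} {p : ℕ}

lemma of_tendsto (hp : 0 < p) {L : ℝ} (h : Tendsto σ atTop (𝓝 L)) : ConvergesToCycle σ p :=
  fun _ => ⟨L, h.comp <| tendsto_atTop_mono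
    (fun k => (Nat.le_mul_of_pos_right k hp).trans (Nat.le_add_right _ _)) tendsto_id⟩

lemma of_periodic (h : Function.Periodic σ p) : ConvergesToCycle σ p :=
  fun j => ⟨σ j, tendsto_const_nhds.congr fun k => by simpa [add_comm] using (h.nat_mul k j).symm⟩

lemma congr (h : ConvergesToCycle σ p) (hστ : ∀ k, σ k = τ k) : ConvergesToCycle τ p :=
  funext hστ ▸ h

lemma add (hσ : ConvergesToCycle σ p) (hτ : ConvergesToCycle τ p) :
    ConvergesToCycle (fun k => σ k + τ k) p := fun j =>
  let ⟨L, hL⟩ := hσ j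
  let ⟨M, hM⟩ := hτ j
  ⟨L + M, hL.add hM⟩

lemma sub (hσ : ConvergesToCycle σ p) (hτ : ConvergesToCycle τ p) :
    ConvergesToCycle (fun k => σ k - τ k) p := fun j =>
  let ⟨L, hL⟩ := hσ j
  let ⟨M, hM⟩ := hτ j
  ⟨L - M, hL.sub hM⟩

lemma const_mul (c : ℝ) (h : ConvergesToCycle σ p) : ConvergesToCycle (fun k => c * σ k) p :=
  fun j =>
  let ⟨L, hL⟩ := h j
  ⟨c * L, hL.const_mul c⟩

lemma comp_add (h : ConvergesToCycle σ p) (K : ℕ) : ConvergesToCycle (fun k => σ (k + K)) p :=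
  fun j => by simpa only [add_assoc] using h (j + K)

lemma exists_abs_le (h : ConvergesToCycle σ p) (hp : 0 < p) : ∃ C, ∀ k, |σ k| ≤ C := by
  have hclass : ∀ j ∈ Finset.range p, BddAbove (Set.range fun k => |σ (k * p + j)|) := by
    intro j _
    obtain ⟨L, hL⟩ := h j
    exact hL.abs.bddAbove_range
  have hcover : Set.range (fun k => |σ k|) ⊆
      ⋃ j ∈ Finset.range p, Set.range fun k => |σ (k * p + j)| := by
    rintro _ ⟨k, rfl⟩
    simp only [Set.mem_iUnion]
    exact ⟨k % p, Finset.mem_range.2 (Nat.mod_lt _ hp), k / p, by simp only [Nat.div_add_mod']⟩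
  obtain ⟨C, hC⟩ := ((Finset.range p).finite_toSet.bddAbove_biUnion.2 hclass).mono hcover
  exact ⟨C, fun k => hC ⟨k, rfl⟩⟩

end ConvergesToCycle

section GeometricGrowth

variable {α ζ : ℝ} {x : ℕ → ℝ}

lemma tendsto_div_pow_of_abs_sub_le (hα : 1 < α) {c C : ℝ}
    (hx : ∀ k, |x k - (ζ * α ^ k - c * k)| ≤ C) :
    Tendsto (fun k => x k / α ^ k) atTop (𝓝 ζ) := by
  have hpow : ∀ k, 0 < α ^ k := fun k => pow_pos (zero_lt_one.trans hα) k
  have hlin : Tendsto (fun k : ℕ => (k : ℝ) / α ^ k) atTop (𝓝 0) := by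
    simpa using tendsto_pow_const_div_const_pow_of_one_lt 1 hα
  have hinv : Tendsto (fun k : ℕ => C / α ^ k) atTop (𝓝 0) := by
    simpa [div_eq_mul_inv] using
      (tendsto_pow_atTop_atTop_of_one_lt hα).inv_tendsto_atTop.const_mul C
  have herr : Tendsto (fun k => (x k - (ζ * α ^ k - c * k)) / α ^ k) atTop (𝓝 0) := by
    refine squeeze_zero_norm (fun k => ?_) hinv
    rw [Real.norm_eq_abs, abs_div, abs_of_pos (hpow k)]
    exact div_le_div_of_nonneg_right (hx k) (hpow k).le
  have hsum := (herr.sub (hlin.const_mul c)).const_add ζ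
  rw [mul_zero, sub_zero, add_zero] at hsum
  refine hsum.congr fun k => ?_
  field_simp [(hpow k).ne']
  ring

lemma eventually_pos_and_lt_succ (hα : 1 < α) (hζ : 0 < ζ)
    (hx : Tendsto (fun k => x k / α ^ k) atTop (𝓝 ζ)) :
    ∀ᶠ k in atTop, 0 < x k ∧ x k < x (k + 1) := by
  have hpow : ∀ k, 0 < α ^ k := fun k => pow_pos (zero_lt_one.trans hα) k
  -- `(x (k + 1) - x k) / α ^ k → α ζ - ζ`, which is positive
  have hdiff : Tendsto (fun k => α * (x (k + 1) / α ^ (k + 1)) - x k / α ^ k) atTop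
      (𝓝 (α * ζ - ζ)) :=
    ((hx.comp (tendsto_add_atTop_nat 1)).const_mul α).sub hx
  filter_upwards [hx.eventually (lt_mem_nhds hζ),
    hdiff.eventually (lt_mem_nhds (by nlinarith : 0 < α * ζ - ζ))] with k hpos hinc
  rw [pow_succ, ← div_div, mul_div_cancel₀ _ (zero_lt_one.trans hα).ne', ← sub_div,
    div_pos_iff_of_pos_right (hpow k), sub_pos] at hinc
  exact ⟨(div_pos_iff_of_pos_right (hpow k)).1 hpos, hinc⟩

lemma tendsto_log_sub_mul_log (hα : α ≠ 0) (hζ : ζ ≠ 0)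
    (hx : Tendsto (fun k => x k / α ^ k) atTop (𝓝 ζ)) :
    Tendsto (fun k : ℕ => log (x k) - k * log α) atTop (𝓝 (log ζ)) := by
  refine ((continuousAt_log hζ).tendsto.comp hx).congr' ?_
  filter_upwards [hx.eventually_ne hζ] with k hk
  rw [Function.comp_apply, log_div (div_ne_zero_iff.1 hk).1 (pow_ne_zero k hα), log_pow]

lemma convergesToCycle_phase (hα : α ≠ 0) (hζ : ζ ≠ 0) {c β : ℝ}
    (hβ : β * log α = (α - 1) * c) {p : ℕ} (hp : 0 < p)
    (hx : Tendsto (fun k => x k / α ^ k) atTop (𝓝 ζ))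
    (he : ConvergesToCycle (fun k => x k - (ζ * α ^ k - c * k)) p) :
    ConvergesToCycle (fun k => x (k + 1) - α * x k - β * log (x k)) p := by
  have hlog : ConvergesToCycle (fun k : ℕ => c + β * (log (x k) - k * log α)) p :=
    .of_tendsto hp <| ((tendsto_log_sub_mul_log hα hζ hx).const_mul β).const_add c
  refine (((he.comp_add 1).sub (he.const_mul α)).sub hlog).congr fun k => ?_
  push_cast
  linear_combination (k : ℝ) * hβ

end GeometricGrowth

lemma exists_pos_int_approx_of_pisot {α : ℝ}
    (h : ∃ ζ : ℝ, ζ ≠ 0 ∧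
      Tendsto (fun k : ℕ => |ζ * α ^ k - (round (ζ * α ^ k) : ℝ)|) atTop (𝓝 0)) :
    ∃ ζ > 0, ∃ a : ℕ → ℤ, Tendsto (fun k => (a k : ℝ) - ζ * α ^ k) atTop (𝓝 0) := by
  obtain ⟨ζ, hζ, hround⟩ := h
  have hlim : Tendsto (fun k : ℕ => (round (ζ * α ^ k) : ℝ) - ζ * α ^ k) atTop (𝓝 0) := by
    rw [tendsto_zero_iff_abs_tendsto_zero]
    simpa only [Function.comp_def, abs_sub_comm] using hround
  rcases hζ.lt_or_gt with hneg | hpos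
  · refine ⟨-ζ, neg_pos.2 hneg, fun k => -round (ζ * α ^ k), ?_⟩
    simpa [neg_mul, neg_add_eq_sub] using hlim.neg
  · exact ⟨ζ, hpos, _, hlim⟩

lemma convergesToCycle_sub_ediv {α ζ : ℝ} {a : ℕ → ℤ}
    (ha : Tendsto (fun k => (a k : ℝ) - ζ * α ^ k) atTop (𝓝 0)) (q : ℤ) {p : ℕ} (hp : 0 < p) :
    ConvergesToCycle (fun k => ((a k - q * k / p : ℤ) : ℝ) - (ζ * α ^ k - q / p * k)) p := by
  have hres : Function.Periodic (fun k : ℕ => ((q * k % p : ℤ) : ℝ) / p) p := fun k => by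
    simp only [Nat.cast_add, mul_add, Int.add_mul_emod_self_right]
  refine ((ConvergesToCycle.of_tendsto hp ha).add (.of_periodic hres)).congr fun k => ?_
  have hp' : (p : ℝ) ≠ 0 := by exact_mod_cast hp.ne'
  have hdiv : ((q * k / p : ℤ) : ℝ) = (q * k - ((q * k % p : ℤ) : ℝ)) / p := by
    rw [eq_div_iff hp', eq_sub_iff_add_eq']
    exact_mod_cast Int.emod_add_ediv_mul (q * k) p
  rw [Int.cast_sub, hdiv]
  field_simp
  ring

theorem exists_admissible_phase_cycle_of_pisot_general (α : ℝ) (hα : 1 < α)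
    (hpisot : ∃ ζ : ℝ, ζ ≠ 0 ∧
      Tendsto (fun k : ℕ => |ζ * α ^ k - (round (ζ * α ^ k) : ℝ)|) atTop (𝓝 0))
    (k₁ : ℤ) (k₂ : ℕ) (hk₂ : 1 ≤ k₂)
    (β : ℝ) (hβ : β = ((α - 1) / Real.log α) * ((k₁ : ℝ) / (k₂ : ℝ))) :
    ∃ n : ℕ → ℕ, StrictMono n ∧ (∀ k, 0 < n k) ∧
      (∃ C : ℝ, ∀ k, |phaseSeq α β n k| ≤ C) ∧
      ∀ j < k₂, ∃ L : ℝ,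
        Tendsto (fun k => phaseSeq α β n (k * k₂ + j)) atTop (𝓝 L) := by
  obtain ⟨ζ, hζ, a, ha⟩ := exists_pos_int_approx_of_pisot hpisot
  set m : ℕ → ℤ := fun k => a k - k₁ * k / k₂
  have he := convergesToCycle_sub_ediv ha k₁ hk₂
  obtain ⟨C, hC⟩ := he.exists_abs_le hk₂
  have hm : Tendsto (fun k => (m k : ℝ) / α ^ k) atTop (𝓝 ζ) := tendsto_div_pow_of_abs_sub_le hα hC
  have hβ' : β * log α = (α - 1) * (k₁ / k₂) := by
    rw [hβ]
    field_simp [(log_pos hα).ne']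
  have hphase := convergesToCycle_phase (zero_lt_one.trans hα).ne' hζ.ne' hβ' hk₂ hm he
  obtain ⟨K, hK⟩ := eventually_atTop.1 (eventually_pos_and_lt_succ hα hζ hm)
  have hmK : ∀ k, 0 < m (k + K) ∧ m (k + K) < m (k + 1 + K) := fun k => by
    rw [add_right_comm]
    exact_mod_cast hK (k + K) (Nat.le_add_left K k)
  have hcast : ∀ k, ((m (k + K)).toNat : ℝ) = m (k + K) := fun k => by
    rw [← Int.cast_natCast, Int.toNat_of_nonneg (hmK k).1.le]
  have hcycle : ConvergesToCycle (phaseSeq α β fun k => (m (k + K)).toNat) k₂ :=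
    (hphase.comp_add K).congr fun k => by
      simp only [phaseSeq]
      rw [hcast, hcast, add_right_comm k 1 K]
  exact ⟨_, strictMono_nat_of_lt_succ fun k => (Int.toNat_lt_toNat (hmK (k + 1)).1).2 (hmK k).2,
    fun k => Int.pos_iff_toNat_pos.1 (hmK k).1, hcycle.exists_abs_le hk₂, fun j _ => hcycle j⟩

/-- If `α > 1` has the Pisot property and `β = ((α-1)/ln α) · (k₁/k₂)` with `k₁, k₂` coprime
integers, `k₂ ≥ 1`, then there exists an `(α,β)`-admissible sequence whose phase sequence
converges to a cycle of period `k₂`. -/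
theorem exists_admissible_phase_cycle_of_pisot (α : ℝ) (hα : 1 < α)
    (hpisot : ∃ ζ : ℝ, ζ ≠ 0 ∧
      Tendsto (fun k : ℕ => |ζ * α ^ k - (round (ζ * α ^ k) : ℝ)|) atTop (𝓝 0))
    (k₁ : ℤ) (k₂ : ℕ) (hk₂ : 1 ≤ k₂) (hcop : Int.gcd k₁ (k₂ : ℤ) = 1)
    (β : ℝ) (hβ : β = ((α - 1) / Real.log α) * ((k₁ : ℝ) / (k₂ : ℝ))) :
    ∃ n : ℕ → ℕ, StrictMono n ∧ (∀ k, 0 < n k) ∧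
      (∃ C : ℝ, ∀ k, |phaseSeq α β n k| ≤ C) ∧
      ∀ j < k₂, ∃ L : ℝ,
        Tendsto (fun k => phaseSeq α β n (k * k₂ + j)) atTop (𝓝 L) :=
  exists_admissible_phase_cycle_of_pisot_general α hα hpisot k₁ k₂ hk₂ β hβ
end

section
/- Let α > 1 and β be real numbers, let (n_k)_{k≥0} be an (α,β)-admissible sequence with phase sequence σ_k := n_{k+1} − α·n_k − β·ln(n_k), let ℓ ≥ 1 be an integer, and set m_k := n_{k+ℓ} − n_k. Then (m_{k+1} − α·m_k) − (σ_{k+ℓ} − σ_k) → ℓ·β·ln α as k → ∞. In particular, if (σ_k) converges to a cycle of period ℓ (i.e. for every 0 ≤ j < ℓ the subsequence (σ_{kℓ+j})_{k≥0} converges), then m_{k+1} − α·m_k → ℓ·β·ln α as k → ∞. -/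
/-!
Expanding the phases, `(m_{k+1} - α m_k) - (σ_{k+ℓ} - σ_k) = β (ln n_{k+ℓ} - ln n_k)`.
A bounded phase is negligible against `n_k → ∞`, and so is `ln n_k`, hence `n_{k+1} / n_k → α`
and `ln n_{k+1} - ln n_k → ln α`; telescoping over `ℓ` steps gives `ℓ ln α`.
If `σ` converges to an `ℓ`-cycle, then `σ_{k+ℓ} - σ_k → 0` along each residue class modulo `ℓ`,
hence along all `k`.
-/

open Filter Topology

theorem Filter.Tendsto.of_tendsto_comp_mul_add {X : Type*} {f : ℕ → X} {l : Filter X} {ℓ : ℕ}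
    (hℓ : 0 < ℓ) (h : ∀ j < ℓ, Tendsto (fun k => f (k * ℓ + j)) atTop l) :
    Tendsto f atTop l := by
  intro s hs
  have hres : ∀ᶠ k in atTop, ∀ j ∈ Set.Iio ℓ, f (k * ℓ + j) ∈ s :=
    (Set.finite_Iio ℓ).eventually_all.2 fun j hj => h j hj hs
  obtain ⟨N, hN⟩ := eventually_atTop.1 hres
  refine mem_atTop_sets.2 ⟨N * ℓ, fun m hm => ?_⟩
  rw [Set.mem_preimage, ← Nat.div_add_mod' m ℓ]
  exact hN _ ((Nat.le_div_iff_mul_le hℓ).2 hm) _ (Nat.mod_lt m hℓ)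

theorem tendsto_add_sub_of_tendsto_succ_sub {G : Type*} [AddCommGroup G] [TopologicalSpace G]
    [ContinuousAdd G] {u : ℕ → G} {a : G} (h : Tendsto (fun k => u (k + 1) - u k) atTop (𝓝 a))
    (ℓ : ℕ) : Tendsto (fun k => u (k + ℓ) - u k) atTop (𝓝 (ℓ • a)) := by
  induction ℓ with
  | zero => simpa using tendsto_const_nhds
  | succ ℓ ih =>
    rw [succ_nsmul]
    refine (ih.add (h.comp (tendsto_add_atTop_nat ℓ))).congr fun k => ?_
    simp only [Function.comp_apply, ← add_assoc]
    abel

theorem tendsto_add_sub_of_tendsto_comp_mul_add {G : Type*} [AddCommGroup G] [TopologicalSpace G]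
    [IsTopologicalAddGroup G] {σ : ℕ → G} {ℓ : ℕ}
    (h : ∀ j < ℓ, ∃ L, Tendsto (fun k => σ (k * ℓ + j)) atTop (𝓝 L)) :
    Tendsto (fun k => σ (k + ℓ) - σ k) atTop (𝓝 0) := by
  obtain rfl | hℓ := ℓ.eq_zero_or_pos
  · simpa using tendsto_const_nhds
  refine Tendsto.of_tendsto_comp_mul_add hℓ fun j hj => ?_
  obtain ⟨L, hL⟩ := h j hj
  have hnext := (hL.comp (tendsto_add_atTop_nat 1)).sub hL
  rw [sub_self] at hnext
  refine hnext.congr fun k => ?_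
  simp only [Function.comp_apply, add_mul, one_mul, add_right_comm _ ℓ j]

section BoundedPhase

variable {α β : ℝ} {x : ℕ → ℝ}

theorem tendsto_succ_div_of_bounded_phase (hx : Tendsto x atTop atTop)
    (hb : ∃ C, ∀ k, |x (k + 1) - α * x k - β * Real.log (x k)| ≤ C) :
    Tendsto (fun k => x (k + 1) / x k) atTop (𝓝 α) := by
  obtain ⟨C, hC⟩ := hb
  set σ := fun k => x (k + 1) - α * x k - β * Real.log (x k)
  have hlog : Tendsto (fun k => Real.log (x k) / x k) atTop (𝓝 0) :=
    Real.isLittleO_log_id_atTop.tendsto_div_nhds_zero.comp hx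
  have hσ : Tendsto (fun k => (x k)⁻¹ * σ k) atTop (𝓝 0) :=
    hx.inv_tendsto_atTop.zero_mul_isBoundedUnder_le (isBoundedUnder_of ⟨C, hC⟩)
  have hsplit : ∀ᶠ k in atTop,
      α + β * (Real.log (x k) / x k) + (x k)⁻¹ * σ k = x (k + 1) / x k := by
    filter_upwards [hx.eventually_gt_atTop 0] with k hk
    field_simp
    ring
  simpa using ((tendsto_const_nhds.add (hlog.const_mul β)).add hσ).congr' hsplit

theorem tendsto_log_succ_sub_log_of_bounded_phase (hα : α ≠ 0) (hx : Tendsto x atTop atTop)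
    (hb : ∃ C, ∀ k, |x (k + 1) - α * x k - β * Real.log (x k)| ≤ C) :
    Tendsto (fun k => Real.log (x (k + 1)) - Real.log (x k)) atTop (𝓝 (Real.log α)) := by
  have hpos := hx.eventually_gt_atTop 0
  refine ((Real.continuousAt_log hα).tendsto.comp
    (tendsto_succ_div_of_bounded_phase hx hb)).congr' ?_
  filter_upwards [hpos, (tendsto_add_atTop_nat 1).eventually hpos] with k hk hk'
  exact Real.log_div hk'.ne' hk.ne'

end BoundedPhase

theorem difference_sequence_phase_general (α β : ℝ) (hα : 1 < α) (n : ℕ → ℕ)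
    (hmono : StrictMono n)
    (hbdd : ∃ C : ℝ, ∀ k, |phaseSeq α β n k| ≤ C)
    (ℓ : ℕ) :
    Tendsto (fun k =>
        (((n (k + 1 + ℓ) : ℝ) - (n (k + 1) : ℝ)) - α * ((n (k + ℓ) : ℝ) - (n k : ℝ)))
          - (phaseSeq α β n (k + ℓ) - phaseSeq α β n k))
      atTop (𝓝 ((ℓ : ℝ) * β * Real.log α)) ∧
    ((∀ j < ℓ, ∃ L : ℝ,
        Tendsto (fun k => phaseSeq α β n (k * ℓ + j)) atTop (𝓝 L)) →
      Tendsto (fun k =>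
          ((n (k + 1 + ℓ) : ℝ) - (n (k + 1) : ℝ)) - α * ((n (k + ℓ) : ℝ) - (n k : ℝ)))
        atTop (𝓝 ((ℓ : ℝ) * β * Real.log α))) := by
  have hn : Tendsto (fun k => (n k : ℝ)) atTop atTop :=
    tendsto_natCast_atTop_atTop.comp hmono.tendsto_atTop
  have hlog := tendsto_add_sub_of_tendsto_succ_sub (u := fun k => Real.log (n k))
    (tendsto_log_succ_sub_log_of_bounded_phase (by linarith) hn hbdd) ℓ
  have hmain := hlog.const_mul β
  rw [nsmul_eq_mul, mul_left_comm, ← mul_assoc] at hmain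
  have hdiff : Tendsto (fun k =>
        (((n (k + 1 + ℓ) : ℝ) - (n (k + 1) : ℝ)) - α * ((n (k + ℓ) : ℝ) - (n k : ℝ)))
          - (phaseSeq α β n (k + ℓ) - phaseSeq α β n k))
      atTop (𝓝 ((ℓ : ℝ) * β * Real.log α)) := by
    refine hmain.congr fun k => ?_
    simp only [phaseSeq, add_right_comm k 1 ℓ]
    ring
  refine ⟨hdiff, fun hcycle => ?_⟩
  simpa using hdiff.add (tendsto_add_sub_of_tendsto_comp_mul_add hcycle)

/-- For an `(α,β)`-admissible sequence `(n_k)` and `m_k := n_{k+ℓ} - n_k`, one has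
`(m_{k+1} - α m_k) - (σ_{k+ℓ} - σ_k) → ℓ β ln α`. In particular, if `(σ_k)` converges to a
cycle of period `ℓ`, then `m_{k+1} - α m_k → ℓ β ln α`. -/
theorem difference_sequence_phase (α β : ℝ) (hα : 1 < α) (n : ℕ → ℕ)
    (hmono : StrictMono n) (hpos : ∀ k, 0 < n k)
    (hbdd : ∃ C : ℝ, ∀ k, |phaseSeq α β n k| ≤ C)
    (ℓ : ℕ) (hℓ : 1 ≤ ℓ) :
    Tendsto (fun k =>
        (((n (k + 1 + ℓ) : ℝ) - (n (k + 1) : ℝ)) - α * ((n (k + ℓ) : ℝ) - (n k : ℝ)))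
          - (phaseSeq α β n (k + ℓ) - phaseSeq α β n k))
      atTop (𝓝 ((ℓ : ℝ) * β * Real.log α)) ∧
    ((∀ j < ℓ, ∃ L : ℝ,
        Tendsto (fun k => phaseSeq α β n (k * ℓ + j)) atTop (𝓝 L)) →
      Tendsto (fun k =>
          ((n (k + 1 + ℓ) : ℝ) - (n (k + 1) : ℝ)) - α * ((n (k + ℓ) : ℝ) - (n k : ℝ)))
        atTop (𝓝 ((ℓ : ℝ) * β * Real.log α))) :=
  difference_sequence_phase_general α β hα n hmono hbdd ℓ
end
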